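/- arXiv:1206.2059 — 3 statements merged into one kernel-verified Lean document; each statement's English description precedes it below -/
import Mathlib

section
/- For any undirected graph G on n ≥ 1 vertices with adjacency matrix C and any y in the probability simplex, yᵀ(I+C)y ≥ 1/α(G), where α(G) is the independence number of G. -/
/-!
Write `f y = yᵀ(I + C)y`. On an edge `{i, j}` the matrix `I + C` restricts to the all-ones block,
so `f` is affine along `eᵢ - eⱼ`. Hence, for an edge inside the support of `y`, all the mass of
one endpoint can be moved onto the other without increasing `f`, and the support shrinks.
Repeating this gives `z` in the simplex with independent support `S` and `f z ≤ f y`; for such `z`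
the adjacency part vanishes, so `f z = ∑ zᵢ² ≥ 1 / |S| ≥ 1 / α` by Cauchy–Schwarz.
-/

open Matrix BigOperators

/-- `s` is an independent set of `G`: pairwise non-adjacent vertices. -/
def IsIndepSet {n : ℕ} (G : SimpleGraph (Fin n)) (s : Finset (Fin n)) : Prop :=
  ∀ i ∈ s, ∀ j ∈ s, ¬ G.Adj i j

open Finset

theorem Matrix.IsSymm.dotProduct_mulVec_comm {V R : Type*} [Fintype V] [CommSemiring R]
    {M : Matrix V V R} (hM : M.IsSymm) (x y : V → R) : x ⬝ᵥ (M *ᵥ y) = y ⬝ᵥ (M *ᵥ x) := by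
  rw [dotProduct_mulVec, ← mulVec_transpose, hM.eq, dotProduct_comm]

theorem Matrix.IsSymm.dotProduct_mulVec_add_smul {V R : Type*} [Fintype V] [CommRing R]
    {M : Matrix V V R} (hM : M.IsSymm) (y d : V → R) (t : R) :
    (y + t • d) ⬝ᵥ (M *ᵥ (y + t • d)) =
      y ⬝ᵥ (M *ᵥ y) + 2 * t * (d ⬝ᵥ (M *ᵥ y)) + t ^ 2 * (d ⬝ᵥ (M *ᵥ d)) := by
  simp only [mulVec_add, mulVec_smul, dotProduct_add, add_dotProduct, dotProduct_smul,
    smul_dotProduct, smul_eq_mul, hM.dotProduct_mulVec_comm y d]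
  ring

section ShiftMass

variable {V : Type*} [DecidableEq V] {y : V → ℝ} {i j : V}

def shiftMass (y : V → ℝ) (j i : V) : V → ℝ :=
  y + y j • (Pi.single i 1 - Pi.single j 1)

theorem shiftMass_apply (hij : i ≠ j) (k : V) :
    shiftMass y j i k = if k = j then 0 else if k = i then y i + y j else y k := by
  rcases eq_or_ne k j with rfl | hkj
  · simp [shiftMass, hij]
  rcases eq_or_ne k i with rfl | hki
  · simp [shiftMass, hij]
  · simp [shiftMass, hki, hkj]

theorem shiftMass_mem_stdSimplex [Fintype V] (hy : y ∈ stdSimplex ℝ V) (hij : i ≠ j) :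
    shiftMass y j i ∈ stdSimplex ℝ V := by
  refine ⟨fun k => ?_, ?_⟩
  · rw [shiftMass_apply hij]
    split_ifs
    exacts [le_rfl, add_nonneg (hy.1 i) (hy.1 j), hy.1 k]
  · simp only [shiftMass, Pi.add_apply, Pi.smul_apply, Pi.sub_apply, smul_eq_mul,
      sum_add_distrib, ← mul_sum, sum_sub_distrib, sum_pi_single', mem_univ, if_true, hy.2]
    ring

theorem support_shiftMass_ssubset (hi : y i ≠ 0) (hj : y j ≠ 0) (hij : i ≠ j) :
    Function.support (shiftMass y j i) ⊂ Function.support y := by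
  refine Set.ssubset_iff_subset_ne.2 ⟨fun k hk => ?_, fun h => ?_⟩
  · rw [Function.mem_support, shiftMass_apply hij] at hk
    split_ifs at hk with hkj hki
    exacts [absurd rfl hk, hki ▸ hi, hk]
  · have : j ∈ Function.support (shiftMass y j i) := h ▸ hj
    simp [Function.mem_support, shiftMass_apply hij] at this

end ShiftMass

namespace SimpleGraph

variable {V : Type*} [Fintype V] (G : SimpleGraph V) [DecidableRel G.Adj]

theorem dotProduct_adjMatrix_mulVec_eq_zero {y : V → ℝ} (hy : G.IsIndepSet (Function.support y)) :
    y ⬝ᵥ (G.adjMatrix ℝ *ᵥ y) = 0 := by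
  simp only [dotProduct, mulVec, mul_sum]
  refine sum_eq_zero fun i _ => sum_eq_zero fun j _ => ?_
  by_cases hadj : G.Adj i j
  · have : y i = 0 ∨ y j = 0 := by
      by_contra! h
      exact hy h.1 h.2 hadj.ne hadj
    rcases this with h | h <;> simp [h]
  · simp [hadj]

variable [DecidableEq V]

theorem dotProduct_one_add_adjMatrix_mulVec_eq_sum_sq {y : V → ℝ}
    (hy : G.IsIndepSet (Function.support y)) :
    y ⬝ᵥ ((1 + G.adjMatrix ℝ) *ᵥ y) = ∑ i, y i ^ 2 := by
  rw [add_mulVec, dotProduct_add, one_mulVec, G.dotProduct_adjMatrix_mulVec_eq_zero hy, add_zero]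
  simp only [dotProduct, sq]

theorem single_sub_single_dotProduct_one_add_adjMatrix_mulVec {i j : V} (h : G.Adj i j) :
    (Pi.single i 1 - Pi.single j 1) ⬝ᵥ
      ((1 + G.adjMatrix ℝ) *ᵥ (Pi.single i 1 - Pi.single j 1)) = 0 := by
  simp [mulVec_sub, sub_dotProduct, single_dotProduct, one_apply, h, h.symm, h.ne, h.ne.symm]

theorem dotProduct_one_add_adjMatrix_mulVec_shiftMass_le {y : V → ℝ} {i j : V} (h : G.Adj i j)
    (hle : ((1 + G.adjMatrix ℝ) *ᵥ y) i ≤ ((1 + G.adjMatrix ℝ) *ᵥ y) j) (hj : 0 ≤ y j) :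
    shiftMass y j i ⬝ᵥ ((1 + G.adjMatrix ℝ) *ᵥ shiftMass y j i) ≤
      y ⬝ᵥ ((1 + G.adjMatrix ℝ) *ᵥ y) := by
  have hM : (1 + G.adjMatrix ℝ).IsSymm := isSymm_one.add G.isSymm_adjMatrix
  rw [shiftMass, hM.dotProduct_mulVec_add_smul,
    G.single_sub_single_dotProduct_one_add_adjMatrix_mulVec h, sub_dotProduct, single_dotProduct,
    single_dotProduct]
  nlinarith

theorem exists_support_ssubset_le {y : V → ℝ} (hy : y ∈ stdSimplex ℝ V) {i j : V}
    (hi : y i ≠ 0) (hj : y j ≠ 0) (hadj : G.Adj i j) :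
    ∃ z ∈ stdSimplex ℝ V, Function.support z ⊂ Function.support y ∧
      z ⬝ᵥ ((1 + G.adjMatrix ℝ) *ᵥ z) ≤ y ⬝ᵥ ((1 + G.adjMatrix ℝ) *ᵥ y) := by
  wlog hle : ((1 + G.adjMatrix ℝ) *ᵥ y) i ≤ ((1 + G.adjMatrix ℝ) *ᵥ y) j generalizing i j
  · exact this hj hi hadj.symm (le_of_not_ge hle)
  exact ⟨shiftMass y j i, shiftMass_mem_stdSimplex hy hadj.ne,
    support_shiftMass_ssubset hi hj hadj.ne,
    G.dotProduct_one_add_adjMatrix_mulVec_shiftMass_le hadj hle (hy.1 j)⟩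

theorem exists_isIndepSet_support_le (y : V → ℝ) (hy : y ∈ stdSimplex ℝ V) :
    ∃ z ∈ stdSimplex ℝ V, G.IsIndepSet (Function.support z) ∧
      z ⬝ᵥ ((1 + G.adjMatrix ℝ) *ᵥ z) ≤ y ⬝ᵥ ((1 + G.adjMatrix ℝ) *ᵥ y) := by
  by_cases hind : G.IsIndepSet (Function.support y)
  · exact ⟨y, hy, hind, le_rfl⟩
  obtain ⟨i, hi, j, hj, -, hadj⟩ : ∃ i, y i ≠ 0 ∧ ∃ j, y j ≠ 0 ∧ i ≠ j ∧ G.Adj i j := by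
    simpa [isIndepSet_iff, Set.Pairwise] using hind
  obtain ⟨w, hw, hwy, hwle⟩ := G.exists_support_ssubset_le hy hi hj hadj
  -- the termination measure decreases
  have : (Function.support w).ncard < (Function.support y).ncard := Set.ncard_lt_ncard hwy
  obtain ⟨z, hz, hzind, hzle⟩ := exists_isIndepSet_support_le w hw
  exact ⟨z, hz, hzind, hzle.trans hwle⟩
termination_by (Function.support y).ncard

end SimpleGraph

theorem one_le_card_support_mul_sum_sq {V : Type*} [Fintype V] {y : V → ℝ} (hy : ∑ i, y i = 1) :
    1 ≤ #{i | y i ≠ 0} * ∑ i, y i ^ 2 := by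
  have hcs := sq_sum_le_card_mul_sum_sq (s := {i | y i ≠ 0}) (f := y)
  rwa [sum_filter_ne_zero, hy, one_pow, sum_filter_of_ne fun i _ h => by simpa using h] at hcs

theorem IsIndepSet.of_isIndepSet_coe {n : ℕ} {G : SimpleGraph (Fin n)} {s : Finset (Fin n)}
    (h : G.IsIndepSet (s : Set (Fin n))) : IsIndepSet G s :=
  fun _ hi _ hj hadj => h hi hj hadj.ne hadj

theorem quad_ge_inv_indepNum_general (n : ℕ) (G : SimpleGraph (Fin n))
    [DecidableRel G.Adj] (α : ℕ)
    (hα : IsGreatest {k : ℕ | ∃ s : Finset (Fin n), IsIndepSet G s ∧ s.card = k} α)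
    (y : Fin n → ℝ) (hy : y ∈ stdSimplex ℝ (Fin n)) :
    1 / (α : ℝ) ≤ y ⬝ᵥ ((1 + G.adjMatrix ℝ) *ᵥ y) := by
  obtain ⟨z, hz, hind, hzy⟩ := G.exists_isIndepSet_support_le y hy
  have hcard : #{i | z i ≠ 0} ≤ α :=
    hα.2 ⟨_, IsIndepSet.of_isIndepSet_coe (by simpa [Function.support] using hind), rfl⟩
  have hsq : 1 ≤ (α : ℝ) * ∑ i, z i ^ 2 :=
    (one_le_card_support_mul_sum_sq hz.2).trans
      (mul_le_mul_of_nonneg_right (by exact_mod_cast hcard) (sum_nonneg fun i _ => sq_nonneg _))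
  have hα0 : (0 : ℝ) < α :=
    pos_of_mul_pos_left (one_pos.trans_le hsq) (sum_nonneg fun i _ => sq_nonneg _)
  rw [div_le_iff₀' hα0]
  calc 1 ≤ (α : ℝ) * ∑ i, z i ^ 2 := hsq
    _ = α * (z ⬝ᵥ ((1 + G.adjMatrix ℝ) *ᵥ z)) := by
      rw [G.dotProduct_one_add_adjMatrix_mulVec_eq_sum_sq hind]
    _ ≤ α * (y ⬝ᵥ ((1 + G.adjMatrix ℝ) *ᵥ y)) := by gcongr

/-- For a graph `G` on `n ≥ 1` vertices with adjacency matrix `C` and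
independence number `α`, every `y` in the probability simplex satisfies
`yᵀ(I+C)y ≥ 1/α`. -/
theorem quad_ge_inv_indepNum (n : ℕ) (hn : 0 < n) (G : SimpleGraph (Fin n))
    [DecidableRel G.Adj] (α : ℕ)
    (hα : IsGreatest {k : ℕ | ∃ s : Finset (Fin n), IsIndepSet G s ∧ s.card = k} α)
    (y : Fin n → ℝ) (hy : y ∈ stdSimplex ℝ (Fin n)) :
    1 / (α : ℝ) ≤ y ⬝ᵥ ((1 + G.adjMatrix ℝ) *ᵥ y) :=
  quad_ge_inv_indepNum_general n G α hα y hy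
end

section
/- If A is an entrywise nonnegative real square matrix, then I - A is positive stable (all eigenvalues have positive real part) if and only if ρ(A) < 1. -/
open Matrix BigOperators

noncomputable def specRad {n : ℕ} (A : Matrix (Fin n) (Fin n) ℝ) : ℝ :=
  sSup {r : ℝ | ∃ μ ∈ spectrum ℂ (A.map Complex.ofReal), r = ‖μ‖}

/-!
For a nonnegative matrix `A` with spectral radius `ρ`, the number `ρ` is itself an eigenvalue
(weak Perron–Frobenius). For `t > ρ` the Neumann series `(t - A)⁻¹ = ∑ A ^ k / t ^ (k + 1)`
converges by Gelfand's formula, so the resolvent is entrywise nonnegative. If `μ` is an eigenvalue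
with `‖μ‖ = ρ` and eigenvector `v`, then `u = |v|` satisfies `ρ u ≤ A u`, hence
`u ≤ (t - ρ) (t - A)⁻¹ u` for all `t > ρ`; were `ρ` in the resolvent set, the right-hand side
would tend to `0` as `t → ρ⁺`, forcing `v = 0`.

Given the Perron root, `1 - ρ` is an eigenvalue of `I - A`, so positive stability forces `ρ < 1`;
conversely every eigenvalue `1 - μ` of `I - A` has real part at least `1 - ‖μ‖ ≥ 1 - ρ`.
-/

open Filter
open scoped NNReal ENNReal Topology

namespace spectrum

variable {A : Type*} [NormedRing A] [NormedAlgebra ℂ A] [CompleteSpace A]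

theorem hasSum_inverse_one_sub_smul {a : A} {z : ℂ}
    (hz : (‖z‖₊ : ℝ≥0∞) < (spectralRadius ℂ a)⁻¹) :
    HasSum (fun k => z ^ k • a ^ k) (Ring.inverse (1 - z • a)) := by
  obtain ⟨c, hzc, hc⟩ := exists_between hz
  lift c to ℝ≥0 using hc.ne_top
  have hc_pos : 0 < c := pos_of_gt (ENNReal.coe_lt_coe.mp hzc)
  have hseries := (hasFPowerSeriesOnBall_inverse_one_sub_smul ℂ a).exchange_radius
    ((differentiableOn_inverse_one_sub_smul hc).hasFPowerSeriesOnBall hc_pos)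
  simpa using hseries.hasSum (Metric.mem_eball.mpr (by simpa [edist_zero_right] using hzc))

theorem hasSum_resolvent {a : A} {z : ℂ} (hz : spectralRadius ℂ a < ‖z‖₊) :
    HasSum (fun k => z⁻¹ ^ (k + 1) • a ^ k) (resolvent a z) := by
  have hz0 : z ≠ 0 := by rintro rfl; simp at hz
  have hsum := (hasSum_inverse_one_sub_smul (a := a) (z := z⁻¹) (by
    rw [nnnorm_inv, ENNReal.coe_inv (nnnorm_ne_zero_iff.mpr hz0)]
    exact ENNReal.inv_lt_inv.mpr hz)).const_smul z⁻¹
  have key : z • resolvent a z = Ring.inverse (1 - z⁻¹ • a) := by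
    simpa [resolvent, Units.smul_def] using
      units_smul_resolvent_self (r := Units.mk0 z hz0) (a := a)
  rw [← inv_smul_smul₀ hz0 (resolvent a z), key]
  simpa [pow_succ', mul_smul] using hsum

theorem mem_one_sub_iff {R A : Type*} [CommRing R] [Ring A] [Algebra R A] {a : A} {r : R} :
    r ∈ spectrum R (1 - a) ↔ 1 - r ∈ spectrum R a := by
  rw [← map_one (algebraMap R A), ← singleton_sub_eq]
  constructor
  · rintro ⟨_, rfl, s, hs, rfl⟩
    simpa using hs
  · intro h
    exact ⟨1, rfl, 1 - r, h, sub_sub_cancel 1 r⟩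

end spectrum

namespace Matrix

variable {ι : Type*} [Fintype ι]

theorem mulVec_mono_of_nonneg {M : Matrix ι ι ℝ} (hM : ∀ i j, 0 ≤ M i j) {x y : ι → ℝ}
    (hxy : x ≤ y) : M *ᵥ x ≤ M *ᵥ y :=
  fun i => Finset.sum_le_sum fun j _ => mul_le_mul_of_nonneg_left (hxy j) (hM i j)

theorem smul_norm_le_mulVec_norm {A : Matrix ι ι ℝ} (hA : ∀ i j, 0 ≤ A i j) {v : ι → ℂ} {μ : ℂ}
    (hv : A.map Complex.ofReal *ᵥ v = μ • v) :
    ‖μ‖ • (fun i => ‖v i‖) ≤ A *ᵥ fun i => ‖v i‖ := by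
  intro i
  calc ‖μ‖ * ‖v i‖ = ‖(A.map Complex.ofReal *ᵥ v) i‖ := by
        rw [hv, Pi.smul_apply, smul_eq_mul, norm_mul]
    _ ≤ ∑ j, ‖A.map Complex.ofReal i j * v j‖ := norm_sum_le _ _
    _ = (A *ᵥ fun i => ‖v i‖) i := by
        simp [mulVec, dotProduct, abs_of_nonneg (hA _ _)]

variable [DecidableEq ι]

theorem map_inv {K L : Type*} [Field K] [Field L] (f : K →+* L) (M : Matrix ι ι K) :
    M⁻¹.map f = (M.map f)⁻¹ := by
  have hdet := RingHom.map_det f M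
  have hadj := RingHom.map_adjugate f M
  simp only [RingHom.mapMatrix_apply] at hdet hadj
  rw [inv_def, inv_def, ← hdet, ← hadj, Ring.inverse_eq_inv', Ring.inverse_eq_inv', ← map_inv₀]
  ext i j
  simp

section FieldExtension

variable {K L : Type*} [Field K] [Field L] [Algebra K L]

theorem algebraMap_sub_map (A : Matrix ι ι K) (t : K) :
    algebraMap L (Matrix ι ι L) (algebraMap K L t) - A.map (algebraMap K L)
      = (algebraMap K (Matrix ι ι K) t - A).map (algebraMap K L) := by
  ext i j
  by_cases h : i = j <;> simp [algebraMap_matrix_apply, h]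

theorem algebraMap_mem_spectrum_map_iff (A : Matrix ι ι K) (t : K) :
    algebraMap K L t ∈ spectrum L (A.map (algebraMap K L)) ↔ t ∈ spectrum K A := by
  have hdet := RingHom.map_det (algebraMap K L) (algebraMap K (Matrix ι ι K) t - A)
  simp only [RingHom.mapMatrix_apply] at hdet
  simp only [spectrum.mem_iff, isUnit_iff_isUnit_det, algebraMap_sub_map, ← hdet,
    isUnit_iff_ne_zero, ne_eq, map_eq_zero]

theorem resolvent_map (A : Matrix ι ι K) (t : K) :
    resolvent (A.map (algebraMap K L)) (algebraMap K L t)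
      = (resolvent A t).map (algebraMap K L) := by
  rw [resolvent, resolvent, ← nonsing_inv_eq_ringInverse, ← nonsing_inv_eq_ringInverse,
    algebraMap_sub_map, map_inv]

end FieldExtension

theorem continuousAt_resolvent {𝕜 : Type*} [NormedField 𝕜] {A : Matrix ι ι 𝕜} {r : 𝕜}
    (hr : r ∈ resolventSet 𝕜 A) : ContinuousAt (resolvent A) r := by
  have hinv : ContinuousAt Inv.inv (algebraMap 𝕜 (Matrix ι ι 𝕜) r - A) := by
    refine continuousAt_matrix_inv _ ?_
    rw [Ring.inverse_eq_inv']
    exact continuousAt_inv₀ (isUnit_iff_ne_zero.mp ((isUnit_iff_isUnit_det _).mp hr))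
  have hsub : Continuous fun s : 𝕜 => algebraMap 𝕜 (Matrix ι ι 𝕜) s - A :=
    (continuous_algebraMap 𝕜 _).sub continuous_const
  have hres : resolvent A = Inv.inv ∘ fun s : 𝕜 => algebraMap 𝕜 (Matrix ι ι 𝕜) s - A :=
    funext fun s => (nonsing_inv_eq_ringInverse _).symm
  exact hres ▸ hinv.comp (x := r) hsub.continuousAt

theorem resolvent_apply_nonneg {A : Matrix ι ι ℝ} (hA : ∀ i j, 0 ≤ A i j) {t : ℝ}
    (ht : spectralRadius ℂ (A.map Complex.ofReal) < ENNReal.ofReal t) (i j : ι) :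
    0 ≤ resolvent A t i j := by
  let _ : NormedRing (Matrix ι ι ℂ) := Matrix.linftyOpNormedRing
  let _ : NormedAlgebra ℂ (Matrix ι ι ℂ) := Matrix.linftyOpNormedAlgebra
  have ht0 : 0 < t := ENNReal.ofReal_pos.mp (pos_of_gt ht)
  have hρ : spectralRadius ℂ (A.map Complex.ofReal) < ‖(t : ℂ)‖₊ := by
    rwa [← enorm_eq_nnnorm, ← ofReal_norm, Complex.norm_real, Real.norm_of_nonneg ht0.le]
  have hsum := spectrum.hasSum_resolvent hρ
  rw [← Complex.coe_algebraMap, resolvent_map] at hsum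
  have hentry : HasSum (fun k => t⁻¹ ^ (k + 1) * (A ^ k) i j) (resolvent A t i j) := by
    rw [← Complex.hasSum_ofReal]
    have hpow (k : ℕ) : A.map Complex.ofReal ^ k = (A ^ k).map Complex.ofReal :=
      (A.map_pow Complex.ofRealHom k).symm
    simpa [hpow] using Pi.hasSum.mp (Pi.hasSum.mp hsum i) j
  exact hentry.nonneg fun k =>
    mul_nonneg (pow_nonneg (inv_nonneg.mpr ht0.le) _) (pow_apply_nonneg hA k i j)

theorem le_smul_resolvent_mulVec {A : Matrix ι ι ℝ} {r t : ℝ} (ht : t ∈ resolventSet ℝ A)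
    (hR : ∀ i j, 0 ≤ resolvent A t i j) {u : ι → ℝ} (hu : r • u ≤ A *ᵥ u) :
    u ≤ (t - r) • (resolvent A t *ᵥ u) := by
  have hinv : resolvent A t * (algebraMap ℝ (Matrix ι ι ℝ) t - A) = 1 := by
    rw [resolvent, ← nonsing_inv_eq_ringInverse]
    exact nonsing_inv_mul _ ((isUnit_iff_isUnit_det _).mp ht)
  have hsub : (algebraMap ℝ (Matrix ι ι ℝ) t - A) *ᵥ u ≤ (t - r) • u := by
    rw [sub_mulVec, Algebra.algebraMap_eq_smul_one, smul_mulVec, one_mulVec, sub_smul]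
    exact sub_le_sub_left hu _
  calc u = resolvent A t *ᵥ ((algebraMap ℝ (Matrix ι ι ℝ) t - A) *ᵥ u) := by
        rw [mulVec_mulVec, hinv, one_mulVec]
    _ ≤ resolvent A t *ᵥ ((t - r) • u) := mulVec_mono_of_nonneg hR hsub
    _ = (t - r) • (resolvent A t *ᵥ u) := mulVec_smul _ _ _

theorem ofReal_norm_mem_spectrum_of_nonneg {A : Matrix ι ι ℝ} (hA : ∀ i j, 0 ≤ A i j) {μ : ℂ}
    (hμ : μ ∈ spectrum ℂ (A.map Complex.ofReal))
    (hmax : ∀ ν ∈ spectrum ℂ (A.map Complex.ofReal), ‖ν‖ ≤ ‖μ‖) :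
    (‖μ‖ : ℂ) ∈ spectrum ℂ (A.map Complex.ofReal) := by
  have hres (t : ℝ) (ht : ‖μ‖ < t) : t ∈ resolventSet ℝ A := by
    refine spectrum.notMem_iff.mp fun hts => ?_
    have hle := hmax t ((algebraMap_mem_spectrum_map_iff (L := ℂ) A t).mpr hts)
    rw [Complex.norm_real, Real.norm_of_nonneg ((norm_nonneg μ).trans ht.le)] at hle
    exact hle.not_gt ht
  have hρ : spectralRadius ℂ (A.map Complex.ofReal) ≤ ENNReal.ofReal ‖μ‖ :=
    iSup₂_le fun ν hν => by
      rw [← enorm_eq_nnnorm, ← ofReal_norm]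
      exact ENNReal.ofReal_le_ofReal (hmax ν hν)
  rw [← Complex.coe_algebraMap, algebraMap_mem_spectrum_map_iff]
  by_contra hμ_res
  have hμ_eig : Module.End.HasEigenvalue (A.map Complex.ofReal).toLin' μ :=
    Module.End.hasEigenvalue_iff_mem_spectrum.mpr (by rwa [spectrum_toLin'])
  obtain ⟨v, hv⟩ := hμ_eig.exists_hasEigenvector
  set u : ι → ℝ := fun i => ‖v i‖
  have hu : ‖μ‖ • u ≤ A *ᵥ u := smul_norm_le_mulVec_norm hA (by simpa using hv.apply_eq_smul)
  have hbound : ∀ t > ‖μ‖, u ≤ (t - ‖μ‖) • (resolvent A t *ᵥ u) := fun t ht =>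
    le_smul_resolvent_mulVec (hres t ht)
      (resolvent_apply_nonneg hA (hρ.trans_lt ((ENNReal.ofReal_lt_ofReal_iff
        ((norm_nonneg μ).trans_lt ht)).mpr ht))) hu
  have hlim : Tendsto (fun t => (t - ‖μ‖) • (resolvent A t *ᵥ u)) (𝓝[>] ‖μ‖) (𝓝 0) := by
    have hcont : ContinuousAt (fun t => (t - ‖μ‖) • (resolvent A t *ᵥ u)) ‖μ‖ :=
      (continuousAt_id.sub continuousAt_const).smul
        ((continuous_id.matrix_mulVec continuous_const).continuousAt.comp
          (continuousAt_resolvent (spectrum.notMem_iff.mp hμ_res)))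
    simpa using hcont.tendsto.mono_left nhdsWithin_le_nhds
  have hu0 : u ≤ 0 := ge_of_tendsto hlim (eventually_nhdsWithin_of_forall hbound)
  exact hv.2 (funext fun i => norm_eq_zero.mp (le_antisymm (hu0 i) (norm_nonneg _)))

end Matrix

theorem specRad_eq_sSup_image {n : ℕ} (A : Matrix (Fin n) (Fin n) ℝ) :
    specRad A = sSup ((‖·‖) '' spectrum ℂ (A.map Complex.ofReal)) := by
  simp only [specRad, Set.image, eq_comm]

theorem norm_le_specRad {n : ℕ} {A : Matrix (Fin n) (Fin n) ℝ} {μ : ℂ}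
    (hμ : μ ∈ spectrum ℂ (A.map Complex.ofReal)) : ‖μ‖ ≤ specRad A := by
  rw [specRad_eq_sSup_image]
  exact le_csSup ((finite_spectrum _).image _).bddAbove ⟨μ, hμ, rfl⟩

theorem exists_norm_eq_specRad {n : ℕ} {A : Matrix (Fin n) (Fin n) ℝ}
    (hne : (spectrum ℂ (A.map Complex.ofReal)).Nonempty) :
    ∃ μ ∈ spectrum ℂ (A.map Complex.ofReal), ‖μ‖ = specRad A := by
  rw [specRad_eq_sSup_image]
  exact (hne.image _).csSup_mem ((finite_spectrum _).image _)

theorem specRad_eq_zero_of_spectrum_eq_empty {n : ℕ} {A : Matrix (Fin n) (Fin n) ℝ}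
    (h : spectrum ℂ (A.map Complex.ofReal) = ∅) : specRad A = 0 := by
  rw [specRad_eq_sSup_image, h, Set.image_empty, Real.sSup_empty]

/-- For an entrywise nonnegative real square matrix `A`, the matrix
`I - A` is positive stable (all complex eigenvalues have positive real part) if and
only if the spectral radius of `A` is less than one. -/
theorem one_sub_posStable_iff_specRad_lt_one (n : ℕ) (A : Matrix (Fin n) (Fin n) ℝ)
    (hA : ∀ i j, 0 ≤ A i j) :
    (∀ μ ∈ spectrum ℂ (((1 : Matrix (Fin n) (Fin n) ℝ) - A).map Complex.ofReal),
        0 < μ.re) ↔ specRad A < 1 := by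
  have hσ (μ : ℂ) : μ ∈ spectrum ℂ (((1 : Matrix (Fin n) (Fin n) ℝ) - A).map Complex.ofReal) ↔
      1 - μ ∈ spectrum ℂ (A.map Complex.ofReal) := by
    rw [Matrix.map_sub _ Complex.ofReal_sub,
      Matrix.map_one _ Complex.ofReal_zero Complex.ofReal_one, spectrum.mem_one_sub_iff]
  constructor
  · intro hstable
    rcases (spectrum ℂ (A.map Complex.ofReal)).eq_empty_or_nonempty with hempty | hne
    · rw [specRad_eq_zero_of_spectrum_eq_empty hempty]
      exact one_pos
    obtain ⟨μ, hμ, hμ_eq⟩ := exists_norm_eq_specRad hne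
    have hperron := ofReal_norm_mem_spectrum_of_nonneg hA hμ fun ν hν => hμ_eq ▸ norm_le_specRad hν
    have hmem : 1 - (specRad A : ℂ) ∈
        spectrum ℂ (((1 : Matrix (Fin n) (Fin n) ℝ) - A).map Complex.ofReal) := by
      rw [hσ, sub_sub_cancel, ← hμ_eq]
      exact hperron
    simpa using hstable _ hmem
  · intro hlt μ hμ
    have hle := norm_le_specRad ((hσ μ).mp hμ)
    have hre := Complex.re_le_norm (1 - μ)
    rw [Complex.sub_re, Complex.one_re] at hre
    linarith
end

section
/- For any graph G on n vertices with adjacency matrix C and any positive integer j ≤ n: there exists π in the probability simplex with πᵀ(I+C)π < 1/j if and only if G has an independent set of size at least j+1 (equivalently α(G) > j). -/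
/-!
Write `M = I + C` and `q x = xᵀ M x`. For an edge `uv` the `{u, v}` block of `M` is all ones, so
`q` is affine along `x + t (e_u - e_v)`. Moving all of `x_v` onto `u`, where `(M x)_u ≤ (M x)_v`,
stays in the simplex, does not increase `q`, and shrinks the support. Once the support `S` is
independent, `q x = ‖x‖² ≥ 1 / |S|` by Cauchy–Schwarz; hence `q ≥ 1 / α(G)` on the simplex.
Conversely, the uniform distribution on an independent set `S` has `q = 1 / |S|`.
-/

open Matrix BigOperators

open Finset

namespace Matrix

variable {V R : Type*} [Fintype V] [DecidableEq V] [CommRing R]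

theorem dotProduct_mulVec_add_smul_single_sub_single {M : Matrix V V R} (hM : M.IsSymm)
    (x : V → R) (t : R) (u v : V) :
    (x + t • (Pi.single u 1 - Pi.single v 1)) ⬝ᵥ
        (M *ᵥ (x + t • (Pi.single u 1 - Pi.single v 1))) =
      x ⬝ᵥ (M *ᵥ x) + 2 * t * ((M *ᵥ x) u - (M *ᵥ x) v) +
        t ^ 2 * (M u u - M u v - M v u + M v v) := by
  have hswap : (Pi.single u 1 - Pi.single v 1) ⬝ᵥ (M *ᵥ x) =
      x ⬝ᵥ (M *ᵥ (Pi.single u 1 - Pi.single v 1)) := by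
    rw [dotProduct_mulVec, ← hM.eq, vecMul_transpose, dotProduct_comm, hM.eq]
  simp only [mulVec_add, mulVec_smul, add_dotProduct, dotProduct_add, smul_dotProduct,
    dotProduct_smul, ← hswap]
  simp only [mulVec_sub, mulVec_single_one, sub_dotProduct, single_one_dotProduct, smul_eq_mul]
  simp only [col, Pi.sub_apply, transpose_apply]
  ring

end Matrix

section

variable {V R : Type*} [DecidableEq V] [Ring R]

theorem add_smul_single_sub_single_eq_zero_of_notMem {x : V → R} {s : Finset V}
    (hxs : ∀ i ∉ s, x i = 0) {u v : V} (hu : u ∈ s) (huv : u ≠ v) {i : V} (hi : i ∉ s.erase v) :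
    (x + x v • (Pi.single u 1 - Pi.single v 1) : V → R) i = 0 := by
  rcases eq_or_ne i v with rfl | hiv
  · simp [huv]
  · have his : i ∉ s := by simpa [hiv] using hi
    have hiu : i ≠ u := by rintro rfl; exact his hu
    simp [hiu, hiv, hxs i his]

end

section stdSimplex

variable {V 𝕜 : Type*} [Fintype V] [Field 𝕜] [LinearOrder 𝕜] [IsStrictOrderedRing 𝕜]

theorem one_le_card_mul_dotProduct_self_of_mem_stdSimplex {x : V → 𝕜}
    (hx : x ∈ stdSimplex 𝕜 V) {s : Finset V} (hxs : ∀ i ∉ s, x i = 0) :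
    1 ≤ #s * (x ⬝ᵥ x) := by
  have hsum : ∑ i ∈ s, x i = ∑ i, x i :=
    sum_subset (subset_univ s) fun i _ hi => hxs i hi
  have hsq : ∑ i ∈ s, x i ^ 2 = x ⬝ᵥ x :=
    (sum_subset (subset_univ s) fun i _ hi => by simp [hxs i hi]).trans (by simp [dotProduct, sq])
  calc (1 : 𝕜) = (∑ i ∈ s, x i) ^ 2 := by rw [hsum, hx.2, one_pow]
    _ ≤ #s * ∑ i ∈ s, x i ^ 2 := sq_sum_le_card_mul_sum_sq
    _ = #s * (x ⬝ᵥ x) := by rw [hsq]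

variable [DecidableEq V]

theorem add_smul_single_sub_single_mem_stdSimplex {x : V → 𝕜} (hx : x ∈ stdSimplex 𝕜 V)
    {u v : V} (huv : u ≠ v) : x + x v • (Pi.single u 1 - Pi.single v 1) ∈ stdSimplex 𝕜 V := by
  refine ⟨fun i => ?_, ?_⟩
  · rcases eq_or_ne i u with rfl | hiu
    · simpa [huv] using add_nonneg (hx.1 i) (hx.1 v)
    rcases eq_or_ne i v with rfl | hiv
    · simp [hiu]
    · simpa [hiu, hiv] using hx.1 i
  · simp [sum_add_distrib, ← mul_sum, hx.2]

theorem uniform_mem_stdSimplex {s : Finset V} (hs : s.Nonempty) :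
    (fun i => if i ∈ s then (#s : 𝕜)⁻¹ else 0) ∈ stdSimplex 𝕜 V := by
  refine ⟨fun i => by positivity, ?_⟩
  simp [sum_ite_mem, hs.card_pos.ne']

end stdSimplex

namespace SimpleGraph

variable {V R 𝕜 : Type*} [Fintype V] [DecidableEq V] (G : SimpleGraph V) [DecidableRel G.Adj]

def motzkinStrausForm [CommRing R] (x : V → R) : R :=
  x ⬝ᵥ ((1 + G.adjMatrix R) *ᵥ x)

section CommRing

variable {G} [CommRing R]

theorem motzkinStrausForm_add_smul_single_sub_single {u v : V} (huv : G.Adj u v) (x : V → R)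
    (t : R) :
    G.motzkinStrausForm (x + t • (Pi.single u 1 - Pi.single v 1)) =
      G.motzkinStrausForm x +
        2 * t * (((1 + G.adjMatrix R) *ᵥ x) u - ((1 + G.adjMatrix R) *ᵥ x) v) := by
  rw [motzkinStrausForm, dotProduct_mulVec_add_smul_single_sub_single
    (isSymm_one.add G.isSymm_adjMatrix)]
  simp [motzkinStrausForm, one_apply, huv, huv.symm, huv.ne, huv.ne.symm]

theorem motzkinStrausForm_eq_dotProduct_self {s : Finset V} (hs : G.IsIndepSet s) {x : V → R}
    (hxs : ∀ i ∉ s, x i = 0) : G.motzkinStrausForm x = x ⬝ᵥ x := by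
  suffices x ⬝ᵥ (G.adjMatrix R *ᵥ x) = 0 by
    rw [motzkinStrausForm, add_mulVec, one_mulVec, dotProduct_add, this, add_zero]
  rw [dot_mulVec_eq_sum_sum]
  refine sum_eq_zero fun j _ => sum_eq_zero fun i _ => ?_
  by_cases hi : i ∈ s
  · by_cases hj : j ∈ s
    · by_cases hij : i = j
      · simp [hij]
      · simp [hs hi hj hij]
    · simp [hxs j hj]
  · simp [hxs i hi]

end CommRing

variable [Field 𝕜]

theorem motzkinStrausForm_uniform {s : Finset V} (hs : G.IsIndepSet s) :
    G.motzkinStrausForm (fun i => if i ∈ s then (#s : 𝕜)⁻¹ else 0) = (#s : 𝕜)⁻¹ := by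
  rw [G.motzkinStrausForm_eq_dotProduct_self hs (fun i hi => if_neg hi)]
  simpa [dotProduct, sum_ite_mem, mul_comm] using mul_self_mul_inv (#s : 𝕜)⁻¹

variable [LinearOrder 𝕜] [IsStrictOrderedRing 𝕜]

theorem exists_isIndepSet_one_le_card_mul_of_support_subset (s : Finset V) {x : V → 𝕜}
    (hx : x ∈ stdSimplex 𝕜 V) (hxs : ∀ i ∉ s, x i = 0) :
    ∃ t : Finset V, G.IsIndepSet t ∧ 1 ≤ #t * G.motzkinStrausForm x := by
  induction s using Finset.strongInduction generalizing x with
  | H s ih =>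
  by_cases hs : G.IsIndepSet s
  · refine ⟨s, hs, ?_⟩
    rw [G.motzkinStrausForm_eq_dotProduct_self hs hxs]
    exact one_le_card_mul_dotProduct_self_of_mem_stdSimplex hx hxs
  obtain ⟨u, hu, v, hv, -, huv⟩ : ∃ u ∈ s, ∃ v ∈ s, u ≠ v ∧ G.Adj u v := by
    simpa [Set.Pairwise] using hs
  wlog hle : ((1 + G.adjMatrix 𝕜) *ᵥ x) u ≤ ((1 + G.adjMatrix 𝕜) *ᵥ x) v generalizing u v
  · exact this v hv u hu huv.symm (le_of_not_ge hle)
  obtain ⟨t, ht, hone⟩ := ih (s.erase v) (erase_ssubset hv)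
    (add_smul_single_sub_single_mem_stdSimplex hx huv.ne)
    (fun i hi => add_smul_single_sub_single_eq_zero_of_notMem hxs hu huv.ne hi)
  refine ⟨t, ht, hone.trans ?_⟩
  gcongr
  have := mul_nonpos_of_nonneg_of_nonpos (hx.1 v) (sub_nonpos.2 hle)
  rw [motzkinStrausForm_add_smul_single_sub_single huv]
  linarith

theorem exists_isIndepSet_one_le_card_mul {x : V → 𝕜} (hx : x ∈ stdSimplex 𝕜 V) :
    ∃ t : Finset V, G.IsIndepSet t ∧ 1 ≤ #t * G.motzkinStrausForm x :=
  G.exists_isIndepSet_one_le_card_mul_of_support_subset univ hx fun i hi => absurd (mem_univ i) hi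

end SimpleGraph

theorem isIndepSet_iff_isIndepSet_coe {n : ℕ} {G : SimpleGraph (Fin n)} {s : Finset (Fin n)} :
    IsIndepSet G s ↔ G.IsIndepSet (s : Set (Fin n)) :=
  ⟨fun h _ hi _ hj _ => h _ hi _ hj, fun h _ hi _ hj hadj => h hi hj hadj.ne hadj⟩

theorem quad_lt_iff_indep_general (n : ℕ) (G : SimpleGraph (Fin n)) [DecidableRel G.Adj]
    (j : ℕ) (hj : 0 < j) :
    (∃ π ∈ stdSimplex ℝ (Fin n), π ⬝ᵥ ((1 + G.adjMatrix ℝ) *ᵥ π) < 1 / (j : ℝ)) ↔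
    (∃ s : Finset (Fin n), IsIndepSet G s ∧ j + 1 ≤ s.card) := by
  have hj' : (0 : ℝ) < j := Nat.cast_pos.2 hj
  simp only [isIndepSet_iff_isIndepSet_coe]
  constructor
  · rintro ⟨π, hπ, hlt⟩
    obtain ⟨t, ht, hone⟩ := G.exists_isIndepSet_one_le_card_mul hπ
    refine ⟨t, ht, ?_⟩
    have hq : 0 < G.motzkinStrausForm π :=
      pos_of_mul_pos_right (one_pos.trans_le hone) (Nat.cast_nonneg _)
    have hjt : j * G.motzkinStrausForm π < #t * G.motzkinStrausForm π :=
      ((lt_div_iff₀' hj').1 hlt).trans_le hone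
    exact_mod_cast lt_of_mul_lt_mul_right hjt hq.le
  · rintro ⟨s, hs, hcard⟩
    have hne : s.Nonempty := card_pos.1 (by omega)
    refine ⟨_, uniform_mem_stdSimplex hne, ?_⟩
    rw [← SimpleGraph.motzkinStrausForm, G.motzkinStrausForm_uniform hs, one_div]
    exact inv_strictAnti₀ hj' (by exact_mod_cast hcard)

/-- For a graph `G` on `n` vertices with adjacency matrix `C` and a
positive integer `j ≤ n`: there exists `π` in the probability simplex with
`πᵀ(I+C)π < 1/j` if and only if `G` has an independent set of size at least `j + 1`. -/
theorem quad_lt_iff_indep (n : ℕ) (G : SimpleGraph (Fin n)) [DecidableRel G.Adj]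
    (j : ℕ) (hj : 0 < j) (hjn : j ≤ n) :
    (∃ π ∈ stdSimplex ℝ (Fin n), π ⬝ᵥ ((1 + G.adjMatrix ℝ) *ᵥ π) < 1 / (j : ℝ)) ↔
    (∃ s : Finset (Fin n), IsIndepSet G s ∧ j + 1 ≤ s.card) :=
  quad_lt_iff_indep_general n G j hj
end
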